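/- Let n ≥ 3 and let c : ℝ → EuclideanSpace ℝ (Fin n) be a smooth regular curve. Let L be an invertible continuous linear map of EuclideanSpace ℝ (Fin n), let λ ∈ EuclideanSpace ℝ (Fin n), and set c̃(t) = Lc(t) + λ. For 1 ≤ r ≤ n−2 let K_r(c,t) = vol(c'(t),…,c^{(r−1)}(t)) · vol(c'(t),…,c^{(r+1)}(t)) / (vol(c'(t),…,c^{(r)}(t))² · ‖c'(t)‖) denote the r-th curvature. Then for every t and every 1 ≤ r ≤ n−2: ‖L⁻¹‖^{−2r} ‖L‖^{−2r−1} · K_r(c,t) ≤ K_r(c̃,t) ≤ ‖L‖^{2r} ‖L⁻¹‖^{2r+1} · K_r(c,t), where ‖·‖ denotes the operator norm. -/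

import Mathlib

open scoped RealInnerProductSpace

/-- The `k`-dimensional volume of the parallelepiped spanned by the first `k`
vectors of the family `v`: the square root of the Gram determinant.
By convention the volume of the empty family is `1`. -/
noncomputable def gvol {E : Type*} [NormedAddCommGroup E] [InnerProductSpace ℝ E]
    (k : ℕ) (v : ℕ → E) : ℝ :=
  Real.sqrt (Matrix.det (Matrix.of fun i j : Fin k => ⟪v i, v j⟫))

/-- The family of iterated derivatives `c'(t), c''(t), …` of a curve `c`;
`curveDerivs c t i = c^{(i+1)}(t)`. -/
noncomputable def curveDerivs {n : ℕ} (c : ℝ → EuclideanSpace ℝ (Fin n)) (t : ℝ) :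
    ℕ → EuclideanSpace ℝ (Fin n) :=
  fun i => iteratedDeriv (i + 1) c t

/-- `curvK r c t` is the `r`-th curvature of the curve `c` at `t`, expressed by the
volume formula of the paper's main theorem:
`K_r(c,t) = vol(c',…,c^{(r-1)}) · vol(c',…,c^{(r+1)}) / (vol(c',…,c^{(r)})² · ‖c'(t)‖)`. -/
noncomputable def curvK {n : ℕ} (r : ℕ) (c : ℝ → EuclideanSpace ℝ (Fin n)) (t : ℝ) : ℝ :=
  gvol (r - 1) (curveDerivs c t) * gvol (r + 1) (curveDerivs c t)
    / ((gvol r (curveDerivs c t)) ^ 2 * ‖deriv c t‖)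

open Matrix

section GramAux

open scoped MatrixOrder in
lemma det_mono {k : ℕ} {A B : Matrix (Fin k) (Fin k) ℝ}
    (hA : A.PosSemidef) (hBA : (B - A).PosSemidef) (hB : B.PosDef) :
    A.det ≤ B.det := by
  have hBsd := hB.posSemidef
  set S := CFC.sqrt B with hSdef
  have hS : S.PosSemidef := Matrix.nonneg_iff_posSemidef.mp (CFC.sqrt_nonneg B)
  have hSS : S * S = B := CFC.sqrt_mul_sqrt_self B (Matrix.nonneg_iff_posSemidef.mpr hBsd)
  have hdetSS : S.det * S.det = B.det := by rw [← det_mul, hSS]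
  have hdetS : IsUnit S.det := by
    refine isUnit_iff_ne_zero.mpr fun h => ?_
    have := hB.det_pos
    rw [← hdetSS, h, zero_mul] at this
    exact lt_irrefl _ this
  have hinvmul : S⁻¹ * S = 1 := nonsing_inv_mul S hdetS
  have hmulinv : S * S⁻¹ = 1 := mul_nonsing_inv S hdetS
  set C := S⁻¹ * A * S⁻¹ with hCdef
  have hSinvH : (S⁻¹).IsHermitian := hS.isHermitian.inv
  have hC : C.PosSemidef := by
    have := hA.mul_mul_conjTranspose_same S⁻¹
    rwa [hSinvH.eq] at this
  have hBid : S⁻¹ * B * S⁻¹ = 1 := by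
    rw [← hSS, ← Matrix.mul_assoc, hinvmul, one_mul, hmulinv]
  have h1C : (1 - C).PosSemidef := by
    have h' : (1 : Matrix (Fin k) (Fin k) ℝ) - C = S⁻¹ * (B - A) * S⁻¹ := by
      rw [hCdef, Matrix.mul_sub, Matrix.sub_mul, hBid]
    have := hBA.mul_mul_conjTranspose_same S⁻¹
    rwa [hSinvH.eq, ← h'] at this
  have hCH : C.IsHermitian := hC.isHermitian
  have hdetC : C.det = ∏ i, hCH.eigenvalues i := by
    simpa using hCH.det_eq_prod_eigenvalues
  have hle1 : ∀ i, hCH.eigenvalues i ≤ 1 := by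
    intro i
    set x : EuclideanSpace ℝ (Fin k) := hCH.eigenvectorBasis i with hx
    have hmv : C *ᵥ ⇑x = hCH.eigenvalues i • ⇑x := hCH.mulVec_eigenvectorBasis i
    have hxx : dotProduct (⇑x) (⇑x) = 1 := by
      have hnorm : ‖x‖ = 1 := (hCH.eigenvectorBasis).orthonormal.1 i
      have : ⟪x, x⟫ = (1 : ℝ) := by
        rw [real_inner_self_eq_norm_sq, hnorm]; norm_num
      rw [← this]
      simp only [PiLp.inner_apply, dotProduct, RCLike.inner_apply, conj_trivial]
    have h0 := h1C.dotProduct_mulVec_nonneg ⇑x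
    rw [sub_mulVec, one_mulVec, hmv, star_trivial, dotProduct_sub,
      dotProduct_smul, smul_eq_mul, hxx, mul_one] at h0
    linarith
  have hC1 : C.det ≤ 1 := by
    rw [hdetC]
    exact Finset.prod_le_one (fun i _ => hC.eigenvalues_nonneg i) (fun i _ => hle1 i)
  have hAeq : A = S * C * S := by
    rw [hCdef, ← Matrix.mul_assoc, ← Matrix.mul_assoc, hmulinv, one_mul,
      Matrix.mul_assoc, hinvmul, mul_one]
  calc A.det = S.det * C.det * S.det := by rw [hAeq, det_mul, det_mul]
    _ = C.det * B.det := by rw [← hdetSS]; ring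
    _ ≤ 1 * B.det := by
        have := hB.det_pos
        nlinarith
    _ = B.det := one_mul _

variable {E : Type*} [NormedAddCommGroup E] [InnerProductSpace ℝ E]

noncomputable def gram (k : ℕ) (v : ℕ → E) : Matrix (Fin k) (Fin k) ℝ :=
  Matrix.of fun i j : Fin k => ⟪v i, v j⟫

lemma gram_quad (k : ℕ) (v : ℕ → E) (x : Fin k → ℝ) :
    dotProduct x (gram k v *ᵥ x) = ⟪∑ i, x i • v i, ∑ j, x j • v j⟫ := by
  simp only [dotProduct, mulVec, _root_.gram, Matrix.of_apply, sum_inner, inner_sum,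
    real_inner_smul_left, real_inner_smul_right, Finset.mul_sum]
  congr 1; ext i; congr 1; ext j
  rw [real_inner_comm]; ring

lemma gram_posSemidef (k : ℕ) (v : ℕ → E) : (gram k v).PosSemidef := by
  rw [posSemidef_iff_dotProduct_mulVec]
  constructor
  · ext i j
    simp [_root_.gram, Matrix.conjTranspose_apply, real_inner_comm]
  · intro x
    rw [star_trivial, gram_quad]
    exact real_inner_self_nonneg

lemma gram_posDef {k : ℕ} {v : ℕ → E}
    (hv : LinearIndependent ℝ (fun i : Fin k => v i)) : (gram k v).PosDef := by
  refine posDef_iff_dotProduct_mulVec.mpr ⟨(gram_posSemidef k v).isHermitian, fun x hx => ?_⟩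
  rw [star_trivial, gram_quad]
  have hw : (∑ i, x i • v (i : ℕ)) ≠ 0 := by
    intro h
    refine hx ?_
    have := (Fintype.linearIndependent_iff.mp hv) x h
    ext i; exact this i
  exact real_inner_self_nonneg.lt_of_ne
    (fun h => hw (inner_self_eq_zero.mp h.symm))

lemma gvol_eq (k : ℕ) (v : ℕ → E) : gvol k v = Real.sqrt (gram k v).det := rfl

lemma gvol_nonneg (k : ℕ) (v : ℕ → E) : 0 ≤ gvol k v := Real.sqrt_nonneg _

lemma gvol_pos {k : ℕ} {v : ℕ → E}
    (hv : LinearIndependent ℝ (fun i : Fin k => v i)) : 0 < gvol k v :=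
  Real.sqrt_pos.mpr (gram_posDef hv).det_pos

lemma li_prefix {k m : ℕ} (h : k ≤ m) {v : ℕ → E}
    (hv : LinearIndependent ℝ (fun i : Fin m => v i)) :
    LinearIndependent ℝ (fun i : Fin k => v i) := by
  have := hv.comp (Fin.castLE h) (Fin.castLE_injective h)
  exact this

lemma gvol_map_le {k : ℕ} {v : ℕ → E}
    (hv : LinearIndependent ℝ (fun i : Fin k => v i))
    (T : E →L[ℝ] E) (hT : 0 < ‖T‖) :
    gvol k (fun i => T (v i)) ≤ ‖T‖ ^ k * gvol k v := by
  have hA : (gram k (fun i => T (v i))).PosSemidef := gram_posSemidef _ _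
  have hB : ((‖T‖ ^ 2 : ℝ) • gram k v).PosDef := by
    refine posDef_iff_dotProduct_mulVec.mpr ⟨?_, fun x hx => ?_⟩
    · have h := (gram_posSemidef k v).isHermitian
      show _ = _
      rw [Matrix.conjTranspose_smul, star_trivial, h.eq]
    · rw [star_trivial, smul_mulVec, dotProduct_smul, smul_eq_mul]
      refine mul_pos (by positivity) ?_
      have := (gram_posDef hv).dotProduct_mulVec_pos hx
      rwa [star_trivial] at this
  have hBA : ((‖T‖ ^ 2 : ℝ) • gram k v - gram k (fun i => T (v i))).PosSemidef := by
    refine posSemidef_iff_dotProduct_mulVec.mpr ⟨?_, fun x => ?_⟩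
    · exact (hB.isHermitian.sub hA.isHermitian)
    · rw [star_trivial, sub_mulVec, dotProduct_sub, smul_mulVec, dotProduct_smul,
        smul_eq_mul, gram_quad, gram_quad, sub_nonneg]
      set w := ∑ i, x i • v (i : ℕ) with hw
      have h1 : (∑ i, x i • T (v (i : ℕ))) = T w := by
        rw [hw, map_sum]; simp
      rw [h1, real_inner_self_eq_norm_sq, real_inner_self_eq_norm_sq]
      have h2 : ‖T w‖ ≤ ‖T‖ * ‖w‖ := T.le_opNorm w
      nlinarith [norm_nonneg (T w), norm_nonneg w, mul_nonneg hT.le (norm_nonneg w)]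
  have hdet := det_mono hA hBA hB
  rw [det_smul] at hdet
  rw [gvol_eq, gvol_eq]
  calc Real.sqrt (gram k (fun i => T (v i))).det
      ≤ Real.sqrt ((‖T‖ ^ 2) ^ Fintype.card (Fin k) * (gram k v).det) :=
        Real.sqrt_le_sqrt hdet
    _ = ‖T‖ ^ k * Real.sqrt (gram k v).det := by
        rw [Real.sqrt_mul (by positivity), Fintype.card_fin, ← pow_mul, mul_comm 2 k,
          pow_mul, Real.sqrt_sq (by positivity)]

end GramAux

section CalcAux

variable {E' F' : Type*} [NormedAddCommGroup E'] [NormedSpace ℝ E']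
  [NormedAddCommGroup F'] [NormedSpace ℝ F']

lemma clm_iteratedDeriv (T : E' →L[ℝ] F') :
    ∀ (m : ℕ) (g : ℝ → E'), ContDiff ℝ (⊤ : ℕ∞) g →
      iteratedDeriv m (fun s => T (g s)) = fun t => T (iteratedDeriv m g t) := by
  intro m
  induction m with
  | zero => intro g hg; funext t; simp
  | succ m ih =>
    intro g hg
    rw [iteratedDeriv_succ', iteratedDeriv_succ']
    have hd : deriv (fun s => T (g s)) = fun s => T (deriv g s) := by
      funext s
      exact (T.hasFDerivAt.comp_hasDerivAt s
        ((hg.differentiable (by simp) s).hasDerivAt)).deriv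
    rw [hd, ih (deriv g) (contDiff_infty_iff_deriv.mp hg).2]

end CalcAux

section MainAux

variable {n : ℕ}

lemma deriv_affine (c : ℝ → EuclideanSpace ℝ (Fin n)) (hc : ContDiff ℝ (⊤ : ℕ∞) c)
    (L : EuclideanSpace ℝ (Fin n) ≃L[ℝ] EuclideanSpace ℝ (Fin n))
    (lam : EuclideanSpace ℝ (Fin n)) :
    deriv (fun s => L (c s) + lam) =
      fun s => (L : EuclideanSpace ℝ (Fin n) →L[ℝ] EuclideanSpace ℝ (Fin n)) (deriv c s) := by
  funext s
  exact (((L : EuclideanSpace ℝ (Fin n) →L[ℝ] EuclideanSpace ℝ (Fin n)).hasFDerivAt.comp_hasDerivAt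
    s ((hc.differentiable (by simp) s).hasDerivAt)).add_const lam).deriv

lemma curveDerivs_affine (c : ℝ → EuclideanSpace ℝ (Fin n)) (hc : ContDiff ℝ (⊤ : ℕ∞) c)
    (L : EuclideanSpace ℝ (Fin n) ≃L[ℝ] EuclideanSpace ℝ (Fin n))
    (lam : EuclideanSpace ℝ (Fin n)) (t : ℝ) :
    curveDerivs (fun s => L (c s) + lam) t = fun i => L (curveDerivs c t i) := by
  funext i
  show iteratedDeriv (i + 1) (fun s => L (c s) + lam) t = L (iteratedDeriv (i + 1) c t)
  rw [iteratedDeriv_succ', deriv_affine c hc L lam,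
    clm_iteratedDeriv (L : EuclideanSpace ℝ (Fin n) →L[ℝ] EuclideanSpace ℝ (Fin n)) i (deriv c)
      (contDiff_infty_iff_deriv.mp hc).2]
  rw [← iteratedDeriv_succ']
  rfl

end MainAux


set_option maxHeartbeats 1000000
set_option synthInstance.maxHeartbeats 400000
section QAux

variable {E : Type*} [NormedAddCommGroup E] [InnerProductSpace ℝ E]

lemma curvQ_le (L : E ≃L[ℝ] E) {v : ℕ → E} {p : ℕ}
    (hv : LinearIndependent ℝ (fun i : Fin (p + 2) => v i)) :
    gvol p (fun i => L (v i)) * gvol (p + 2) (fun i => L (v i)) /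
        ((gvol (p + 1) (fun i => L (v i))) ^ 2 * ‖L (v 0)‖)
      ≤ ‖(L : E →L[ℝ] E)‖ ^ (2 * (p + 1)) * ‖(L.symm : E →L[ℝ] E)‖ ^ (2 * (p + 1) + 1) *
        (gvol p v * gvol (p + 2) v / ((gvol (p + 1) v) ^ 2 * ‖v 0‖)) := by
  have hv0 : v 0 ≠ 0 := by
    have := hv.ne_zero (⟨0, by omega⟩ : Fin (p + 2))
    simpa using this
  have hL0 : L (v 0) ≠ 0 := fun h => hv0 (by simpa using congrArg L.symm h)
  have hNL : 0 < ‖(L : E →L[ℝ] E)‖ := by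
    refine norm_pos_iff.mpr fun h => hL0 ?_
    have : (L : E →L[ℝ] E) (v 0) = (0 : E →L[ℝ] E) (v 0) := by rw [h]
    simpa using this
  have hNS : 0 < ‖(L.symm : E →L[ℝ] E)‖ := by
    refine norm_pos_iff.mpr fun h => hv0 ?_
    have : (L.symm : E →L[ℝ] E) (L (v 0)) = (0 : E →L[ℝ] E) (L (v 0)) := by rw [h]
    simpa using this
  have hw : LinearIndependent ℝ (fun i : Fin (p + 2) => L (v i)) := by
    have := hv.map' L.toLinearEquiv.toLinearMap L.toLinearEquiv.ker
    exact this
  -- positivity of volumes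
  have ha : 0 < gvol p v := gvol_pos (li_prefix (Nat.le_add_right p 2) hv)
  have hb : 0 < gvol (p + 2) v := gvol_pos hv
  have hg : 0 < gvol (p + 1) v := gvol_pos (li_prefix (Nat.le_succ (p + 1)) hv)
  have ha' : 0 < gvol p (fun i => L (v i)) := gvol_pos (li_prefix (v := fun i => L (v i)) (Nat.le_add_right p 2) hw)
  have hb' : 0 < gvol (p + 2) (fun i => L (v i)) := gvol_pos hw
  have hg' : 0 < gvol (p + 1) (fun i => L (v i)) := gvol_pos (li_prefix (v := fun i => L (v i)) (Nat.le_succ (p + 1)) hw)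
  have hd : 0 < ‖v 0‖ := norm_pos_iff.mpr hv0
  have hd' : 0 < ‖L (v 0)‖ := norm_pos_iff.mpr hL0
  -- the four basic estimates
  have h1 : gvol p (fun i => L (v i)) ≤ ‖(L : E →L[ℝ] E)‖ ^ p * gvol p v := by
    have := gvol_map_le (li_prefix (Nat.le_add_right p 2) hv) (L : E →L[ℝ] E) hNL
    simpa using this
  have h2 : gvol (p + 2) (fun i => L (v i)) ≤ ‖(L : E →L[ℝ] E)‖ ^ (p + 2) * gvol (p + 2) v := by
    have := gvol_map_le hv (L : E →L[ℝ] E) hNL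
    simpa using this
  have h3 : gvol (p + 1) v ≤ ‖(L.symm : E →L[ℝ] E)‖ ^ (p + 1) * gvol (p + 1) (fun i => L (v i)) := by
    have := gvol_map_le (v := fun i => L (v i)) (li_prefix (v := fun i => L (v i)) (Nat.le_succ (p + 1)) hw)
      (L.symm : E →L[ℝ] E) hNS
    simpa using this
  have h4 : ‖v 0‖ ≤ ‖(L.symm : E →L[ℝ] E)‖ * ‖L (v 0)‖ := by
    have := (L.symm : E →L[ℝ] E).le_opNorm (L (v 0))
    simpa using this
  set NL := ‖(L : E →L[ℝ] E)‖
  set NS := ‖(L.symm : E →L[ℝ] E)‖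
  rw [← mul_div_assoc, div_le_div_iff₀ (by positivity) (by positivity)]
  calc gvol p (fun i => L (v i)) * gvol (p + 2) (fun i => L (v i)) * (gvol (p + 1) v ^ 2 * ‖v 0‖)
      ≤ (NL ^ p * gvol p v) * (NL ^ (p + 2) * gvol (p + 2) v) *
          ((NS ^ (p + 1) * gvol (p + 1) (fun i => L (v i))) ^ 2 * (NS * ‖L (v 0)‖)) := by
        refine mul_le_mul (mul_le_mul h1 h2 hb'.le (by positivity)) ?_ (by positivity)
          (by positivity)
        exact mul_le_mul (pow_le_pow_left₀ hg.le h3 2) h4 hd.le (by positivity)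
    _ = NL ^ (2 * (p + 1)) * NS ^ (2 * (p + 1) + 1) * (gvol p v * gvol (p + 2) v) *
          ((gvol (p + 1) fun i => L (v i)) ^ 2 * ‖L (v 0)‖) := by ring

end QAux

/-- **Corollary 6.7 of the paper (curvature bounds via operator norms).**
Let `c` be a smooth regular curve in `ℝⁿ` (`n ≥ 3`), let `L` be an invertible
continuous linear map, let `λ` be a vector, and let `c̃(t) = Lc(t) + λ`.  Then for
every `t` and `1 ≤ r ≤ n - 2`:
`‖L⁻¹‖^{-2r} ‖L‖^{-2r-1} · K_r(c,t) ≤ K_r(c̃,t) ≤ ‖L‖^{2r} ‖L⁻¹‖^{2r+1} · K_r(c,t)`. -/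
theorem curvature_bounds_of_opNorm
    (n : ℕ) (hn : 3 ≤ n) (c : ℝ → EuclideanSpace ℝ (Fin n))
    (hc : ContDiff ℝ (⊤ : ℕ∞) c)
    (hreg : ∀ t, LinearIndependent ℝ (fun i : Fin (n - 1) => iteratedDeriv (i + 1) c t))
    (L : EuclideanSpace ℝ (Fin n) ≃L[ℝ] EuclideanSpace ℝ (Fin n))
    (lam : EuclideanSpace ℝ (Fin n)) :
    ∀ t : ℝ, ∀ r : ℕ, 1 ≤ r → r ≤ n - 2 →
      (‖(L.symm : EuclideanSpace ℝ (Fin n) →L[ℝ] EuclideanSpace ℝ (Fin n))‖ ^ (2 * r))⁻¹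
          * (‖(L : EuclideanSpace ℝ (Fin n) →L[ℝ] EuclideanSpace ℝ (Fin n))‖ ^ (2 * r + 1))⁻¹
          * curvK r c t
        ≤ curvK r (fun s => L (c s) + lam) t
      ∧ curvK r (fun s => L (c s) + lam) t
        ≤ ‖(L : EuclideanSpace ℝ (Fin n) →L[ℝ] EuclideanSpace ℝ (Fin n))‖ ^ (2 * r)
            * ‖(L.symm : EuclideanSpace ℝ (Fin n) →L[ℝ] EuclideanSpace ℝ (Fin n))‖ ^ (2 * r + 1)
            * curvK r c t := by
  intro t r hr1 hr2
  obtain ⟨p, rfl⟩ : ∃ p, r = p + 1 := ⟨r - 1, by omega⟩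
  have hc' : ContDiff ℝ (⊤ : ℕ∞) c := hc.of_le (by simp)
  set v := curveDerivs c t with hvdef
  have hli : LinearIndependent ℝ (fun i : Fin (p + 2) => v i) := by
    have h2 : p + 2 ≤ n - 1 := by omega
    exact li_prefix h2 (hreg t)
  have hw : LinearIndependent ℝ (fun i : Fin (p + 2) => L (v i)) := by
    have := hli.map' L.toLinearEquiv.toLinearMap L.toLinearEquiv.ker
    exact this
  have hcd : curveDerivs (fun s => L (c s) + lam) t = fun i => L (v i) :=
    curveDerivs_affine c hc' L lam t
  have hv0 : v 0 = deriv c t := by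
    show iteratedDeriv (0 + 1) c t = deriv c t
    rw [Nat.zero_add, iteratedDeriv_one]
  have hder : deriv (fun s => L (c s) + lam) t = L (v 0) := by
    have := congrFun (deriv_affine c hc' L lam) t
    rw [this, hv0]
    rfl
  have hv0ne : v 0 ≠ 0 := by
    have := hli.ne_zero (⟨0, by omega⟩ : Fin (p + 2))
    simpa using this
  have hL0 : L (v 0) ≠ 0 := fun h => hv0ne (by simpa using congrArg L.symm h)
  have hposL : 0 < ‖L (v 0)‖ := norm_pos_iff.mpr hL0
  have hposv : 0 < ‖v 0‖ := norm_pos_iff.mpr hv0ne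
  have hNL : 0 < ‖(L : EuclideanSpace ℝ (Fin n) →L[ℝ] EuclideanSpace ℝ (Fin n))‖ := by
    have h1 : ‖L (v 0)‖
        ≤ ‖(L : EuclideanSpace ℝ (Fin n) →L[ℝ] EuclideanSpace ℝ (Fin n))‖ * ‖v 0‖ :=
      (L : EuclideanSpace ℝ (Fin n) →L[ℝ] EuclideanSpace ℝ (Fin n)).le_opNorm (v 0)
    nlinarith
  have hNS : 0 < ‖(L.symm : EuclideanSpace ℝ (Fin n) →L[ℝ] EuclideanSpace ℝ (Fin n))‖ := by
    have h1 : ‖v 0‖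
        ≤ ‖(L.symm : EuclideanSpace ℝ (Fin n) →L[ℝ] EuclideanSpace ℝ (Fin n))‖ * ‖L (v 0)‖ := by
      have := (L.symm : EuclideanSpace ℝ (Fin n) →L[ℝ] EuclideanSpace ℝ (Fin n)).le_opNorm
        (L (v 0))
      simpa using this
    nlinarith
  have e1 : p + 1 - 1 = p := rfl
  have e2 : p + 1 + 1 = p + 2 := rfl
  have hK1 : curvK (p + 1) c t
      = gvol p v * gvol (p + 2) v / (gvol (p + 1) v ^ 2 * ‖v 0‖) := by
    rw [curvK, e1, e2, ← hvdef, hv0]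
  have hK2 : curvK (p + 1) (fun s => L (c s) + lam) t
      = gvol p (fun i => L (v i)) * gvol (p + 2) (fun i => L (v i))
        / (gvol (p + 1) (fun i => L (v i)) ^ 2 * ‖L (v 0)‖) := by
    rw [curvK, e1, e2, hcd, hder]
  constructor
  · have hmain := curvQ_le (L := L.symm) (v := fun i => L (v i)) (p := p) hw
    simp only [ContinuousLinearEquiv.symm_apply_apply, ContinuousLinearEquiv.symm_symm] at hmain
    rw [hK1, hK2]
    calc (‖(L.symm : EuclideanSpace ℝ (Fin n) →L[ℝ] EuclideanSpace ℝ (Fin n))‖ ^ (2 * (p + 1)))⁻¹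
          * (‖(L : EuclideanSpace ℝ (Fin n) →L[ℝ] EuclideanSpace ℝ (Fin n))‖ ^ (2 * (p + 1) + 1))⁻¹
          * (gvol p v * gvol (p + 2) v / (gvol (p + 1) v ^ 2 * ‖v 0‖))
        ≤ (‖(L.symm : EuclideanSpace ℝ (Fin n) →L[ℝ] EuclideanSpace ℝ (Fin n))‖ ^ (2 * (p + 1)))⁻¹
          * (‖(L : EuclideanSpace ℝ (Fin n) →L[ℝ] EuclideanSpace ℝ (Fin n))‖ ^ (2 * (p + 1) + 1))⁻¹
          * (‖(L.symm : EuclideanSpace ℝ (Fin n) →L[ℝ] EuclideanSpace ℝ (Fin n))‖ ^ (2 * (p + 1))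
            * ‖(L : EuclideanSpace ℝ (Fin n) →L[ℝ] EuclideanSpace ℝ (Fin n))‖ ^ (2 * (p + 1) + 1)
            * (gvol p (fun i => L (v i)) * gvol (p + 2) (fun i => L (v i))
              / (gvol (p + 1) (fun i => L (v i)) ^ 2 * ‖L (v 0)‖))) := by
          exact mul_le_mul_of_nonneg_left hmain (by positivity)
      _ = gvol p (fun i => L (v i)) * gvol (p + 2) (fun i => L (v i))
            / (gvol (p + 1) (fun i => L (v i)) ^ 2 * ‖L (v 0)‖) := by
          field_simp
  · have hmain := curvQ_le (L := L) (v := v) (p := p) hli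
    rw [hK1, hK2]
    exact hmain
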